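/- arXiv:1003.0826 — 3 statements merged into one kernel-verified Lean document; each statement's English description precedes it below -/
import Mathlib

section
/- Let U ⊆ ℝⁿ be a convex open set and let Z ⊆ U be a set such that every closed line segment contained in U meets Z in a finite set. Let f : U → ℝ be a continuous function that is differentiable at every point of U \ Z. Then f is Lipschitz on U (for some constant) if and only if there is a constant M ≥ 0 such that |∂f/∂xᵢ(x)| ≤ M for every x ∈ U \ Z and every i = 1,…,n. Quantitatively: if all partial derivatives are bounded by M on U \ Z then f is Lipschitz with constant √n·M, and if f is Lipschitz with constant L then every partial derivative at every point of U \ Z is bounded in absolute value by L. -/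
/-!
On a segment `[x, y]` the function `t ↦ f (x + t • (y - x))` is continuous and, off finitely many
parameters, differentiable with derivative `fderiv f (y - x)`. The one-variable mean value
inequality survives finitely many exceptional points: cut the interval at them and apply the mean
value theorem on each piece. A bound `M` on the partial derivatives bounds the Riesz representative
of `fderiv f`, hence its operator norm, by `√n · M`. Conversely a Lipschitz constant bounds the
operator norm of the derivative at every point where `f` is differentiable.
-/

open Set

theorem abs_sub_le_mul_of_hasDerivAt_off_finite {g g' : ℝ → ℝ} {C a b : ℝ} {T : Set ℝ}
    (hT : T.Finite) (hab : a ≤ b) (hg : ContinuousOn g (Icc a b))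
    (hg' : ∀ t ∈ Ioo a b \ T, HasDerivAt g (g' t) t)
    (bound : ∀ t ∈ Ioo a b \ T, |g' t| ≤ C) :
    |g b - g a| ≤ C * (b - a) := by
  induction T, hT using Set.Finite.induction_on generalizing a b with
  | empty =>
    rcases hab.eq_or_lt with rfl | hlt
    · simp
    have hderiv : ∀ t ∈ Ioo a b, HasDerivAt g (g' t) t := fun t ht => hg' t ⟨ht, notMem_empty t⟩
    obtain ⟨c, hc, hslope⟩ := exists_hasDerivAt_eq_slope g g' hlt hg hderiv
    have hba : 0 < b - a := sub_pos.2 hlt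
    have := bound c ⟨hc, notMem_empty c⟩
    rwa [hslope, abs_div, abs_of_pos hba, div_le_iff₀ hba] at this
  | @insert s T _ _ ih =>
    have restrict : ∀ {a' b'}, a ≤ a' → b' ≤ b → s ∉ Ioo a' b' →
        Ioo a' b' \ T ⊆ Ioo a b \ insert s T := by
      rintro a' b' ha hb hs t ⟨ht, htT⟩
      refine ⟨⟨ha.trans_lt ht.1, ht.2.trans_le hb⟩, ?_⟩
      rintro (rfl | h)
      exacts [hs ht, htT h]
    by_cases hs : s ∈ Ioo a b
    · -- cutting `[a, b]` at `s` removes `s` from both open halves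
      have left := ih hs.1.le (hg.mono (Icc_subset_Icc_right hs.2.le))
        (fun t ht => hg' t (restrict le_rfl hs.2.le (lt_irrefl s ·.2) ht))
        (fun t ht => bound t (restrict le_rfl hs.2.le (lt_irrefl s ·.2) ht))
      have right := ih hs.2.le (hg.mono (Icc_subset_Icc_left hs.1.le))
        (fun t ht => hg' t (restrict hs.1.le le_rfl (lt_irrefl s ·.1) ht))
        (fun t ht => bound t (restrict hs.1.le le_rfl (lt_irrefl s ·.1) ht))
      calc |g b - g a| ≤ |g b - g s| + |g s - g a| := abs_sub_le _ _ _
        _ ≤ C * (b - s) + C * (s - a) := add_le_add right left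
        _ = C * (b - a) := by ring
    · exact ih hab hg (fun t ht => hg' t (restrict le_rfl le_rfl hs ht))
        (fun t ht => bound t (restrict le_rfl le_rfl hs ht))

theorem EuclideanSpace.norm_le_sqrt_card_mul {ι : Type*} [Fintype ι] {v : EuclideanSpace ℝ ι}
    {M : ℝ} (hM : 0 ≤ M) (h : ∀ i, |v i| ≤ M) : ‖v‖ ≤ √(Fintype.card ι) * M := by
  rw [EuclideanSpace.norm_eq, ← Real.sqrt_sq hM, ← Real.sqrt_mul (Nat.cast_nonneg _)]
  refine Real.sqrt_le_sqrt ?_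
  calc ∑ i, ‖v i‖ ^ 2 ≤ ∑ _i : ι, M ^ 2 :=
        Finset.sum_le_sum fun i _ => pow_le_pow_left₀ (norm_nonneg _) (h i) 2
    _ = Fintype.card ι * M ^ 2 := by simp

theorem EuclideanSpace.opNorm_le_sqrt_card_mul {ι : Type*} [Fintype ι] [DecidableEq ι]
    {φ : EuclideanSpace ℝ ι →L[ℝ] ℝ} {M : ℝ} (hM : 0 ≤ M)
    (h : ∀ i, |φ (EuclideanSpace.single i 1)| ≤ M) : ‖φ‖ ≤ √(Fintype.card ι) * M := by
  -- the Riesz representative of `φ` has coordinates `φ (single i 1)`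
  rw [← ((InnerProductSpace.toDual ℝ _).symm).norm_map φ]
  refine EuclideanSpace.norm_le_sqrt_card_mul hM fun i => ?_
  simpa [← InnerProductSpace.toDual_symm_apply, EuclideanSpace.inner_single_right] using h i

theorem abs_sub_le_of_norm_fderiv_le_off_finite {E : Type*} [NormedAddCommGroup E]
    [NormedSpace ℝ E] {f : E → ℝ} {Z : Set E} {x y : E} {C : ℝ}
    (hZ : (Z ∩ segment ℝ x y).Finite) (hf : ContinuousOn f (segment ℝ x y))
    (hdiff : ∀ z ∈ segment ℝ x y \ Z, DifferentiableAt ℝ f z)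
    (bound : ∀ z ∈ segment ℝ x y \ Z, ‖fderiv ℝ f z‖ ≤ C) :
    |f y - f x| ≤ C * ‖y - x‖ := by
  rcases eq_or_ne x y with rfl | hxy
  · simp
  set γ : ℝ →ᵃ[ℝ] E := AffineMap.lineMap x y
  have hγ : MapsTo γ (Icc 0 1) (segment ℝ x y) := by
    rw [segment_eq_image_lineMap]
    exact mapsTo_image _ _
  have hT : (γ ⁻¹' (Z ∩ segment ℝ x y)).Finite :=
    hZ.preimage (AffineMap.lineMap_injective ℝ hxy).injOn
  have off : ∀ t ∈ Ioo 0 1 \ γ ⁻¹' (Z ∩ segment ℝ x y), γ t ∈ segment ℝ x y \ Z :=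
    fun t ⟨ht, htZ⟩ => ⟨hγ (Ioo_subset_Icc_self ht), fun hz => htZ ⟨hz, hγ (Ioo_subset_Icc_self ht)⟩⟩
  have key := abs_sub_le_mul_of_hasDerivAt_off_finite (g := f ∘ γ)
    (g' := fun t => fderiv ℝ f (γ t) (y - x)) (C := C * ‖y - x‖) hT zero_le_one
    (hf.comp AffineMap.lineMap_continuous.continuousOn hγ)
    (fun t ht => (hdiff _ (off t ht)).hasFDerivAt.comp_hasDerivAt t AffineMap.hasDerivAt_lineMap)
    (fun t ht => ((fderiv ℝ f (γ t)).le_opNorm (y - x)).trans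
      (mul_le_mul_of_nonneg_right (bound _ (off t ht)) (norm_nonneg _)))
  simpa [γ] using key

theorem lipschitz_iff_bounded_partials_general
    {n : ℕ} (U Z : Set (EuclideanSpace ℝ (Fin n)))
    (hUopen : IsOpen U) (hUconv : Convex ℝ U)
    (hseg : ∀ x y : EuclideanSpace ℝ (Fin n), segment ℝ x y ⊆ U →
      (Z ∩ segment ℝ x y).Finite)
    (f : EuclideanSpace ℝ (Fin n) → ℝ)
    (hcont : ContinuousOn f U)
    (hdiff : ∀ x ∈ U \ Z, DifferentiableAt ℝ f x) :
    ((∃ L : ℝ, 0 ≤ L ∧ ∀ x ∈ U, ∀ y ∈ U, |f x - f y| ≤ L * ‖x - y‖) ↔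
      (∃ M : ℝ, 0 ≤ M ∧ ∀ x ∈ U \ Z, ∀ i : Fin n,
        |fderiv ℝ f x (EuclideanSpace.single i 1)| ≤ M)) ∧
    (∀ M : ℝ, 0 ≤ M →
      (∀ x ∈ U \ Z, ∀ i : Fin n, |fderiv ℝ f x (EuclideanSpace.single i 1)| ≤ M) →
      ∀ x ∈ U, ∀ y ∈ U, |f x - f y| ≤ Real.sqrt n * M * ‖x - y‖) ∧
    (∀ L : ℝ, 0 ≤ L →
      (∀ x ∈ U, ∀ y ∈ U, |f x - f y| ≤ L * ‖x - y‖) →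
      ∀ x ∈ U \ Z, ∀ i : Fin n, |fderiv ℝ f x (EuclideanSpace.single i 1)| ≤ L) := by
  have lipschitz_of_partials : ∀ M : ℝ, 0 ≤ M →
      (∀ x ∈ U \ Z, ∀ i : Fin n, |fderiv ℝ f x (EuclideanSpace.single i 1)| ≤ M) →
      ∀ x ∈ U, ∀ y ∈ U, |f x - f y| ≤ Real.sqrt n * M * ‖x - y‖ := by
    intro M hM hpartial x hx y hy
    have hsub : segment ℝ y x ⊆ U := hUconv.segment_subset hy hx
    have := abs_sub_le_of_norm_fderiv_le_off_finite (hseg y x hsub) (hcont.mono hsub)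
      (fun z hz => hdiff z ⟨hsub hz.1, hz.2⟩)
      (fun z hz => EuclideanSpace.opNorm_le_sqrt_card_mul hM (hpartial z ⟨hsub hz.1, hz.2⟩))
    rwa [Fintype.card_fin] at this
  have partials_of_lipschitz : ∀ L : ℝ, 0 ≤ L →
      (∀ x ∈ U, ∀ y ∈ U, |f x - f y| ≤ L * ‖x - y‖) →
      ∀ x ∈ U \ Z, ∀ i : Fin n, |fderiv ℝ f x (EuclideanSpace.single i 1)| ≤ L := by
    intro L hL hlip x hx i
    have hnorm : ‖fderiv ℝ f x‖ ≤ L := norm_fderiv_le_of_lip' ℝ hL <|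
      Filter.mem_of_superset (hUopen.mem_nhds hx.1) fun y hy => hlip y hy x hx.1
    calc |fderiv ℝ f x (EuclideanSpace.single i 1)|
        ≤ ‖fderiv ℝ f x‖ * ‖EuclideanSpace.single i (1 : ℝ)‖ := (fderiv ℝ f x).le_opNorm _
      _ ≤ L := by simpa using hnorm
  refine ⟨⟨fun ⟨L, hL, hlip⟩ => ⟨L, hL, partials_of_lipschitz L hL hlip⟩,
    fun ⟨M, hM, hpartial⟩ => ⟨√n * M, by positivity, lipschitz_of_partials M hM hpartial⟩⟩,
    lipschitz_of_partials, partials_of_lipschitz⟩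

/-- **Lipschitz criterion off a segment-finite exceptional set** (Lemma 2.1 of the paper).
Let `U ⊆ ℝⁿ` be convex open, `Z ⊆ U` meet every closed segment contained in `U` in a finite
set, and `f : U → ℝ` be continuous on `U` and differentiable at every point of `U \ Z`.
Then `f` is Lipschitz on `U` iff its partial derivatives are bounded on `U \ Z`;
quantitatively, bound `M` on the partials gives Lipschitz constant `√n · M`, and Lipschitz
constant `L` bounds every partial derivative by `L`. -/
theorem lipschitz_iff_bounded_partials
    {n : ℕ} (U Z : Set (EuclideanSpace ℝ (Fin n)))
    (hUopen : IsOpen U) (hUconv : Convex ℝ U) (hZU : Z ⊆ U)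
    (hseg : ∀ x y : EuclideanSpace ℝ (Fin n), segment ℝ x y ⊆ U →
      (Z ∩ segment ℝ x y).Finite)
    (f : EuclideanSpace ℝ (Fin n) → ℝ)
    (hcont : ContinuousOn f U)
    (hdiff : ∀ x ∈ U \ Z, DifferentiableAt ℝ f x) :
    ((∃ L : ℝ, 0 ≤ L ∧ ∀ x ∈ U, ∀ y ∈ U, |f x - f y| ≤ L * ‖x - y‖) ↔
      (∃ M : ℝ, 0 ≤ M ∧ ∀ x ∈ U \ Z, ∀ i : Fin n,
        |fderiv ℝ f x (EuclideanSpace.single i 1)| ≤ M)) ∧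
    (∀ M : ℝ, 0 ≤ M →
      (∀ x ∈ U \ Z, ∀ i : Fin n, |fderiv ℝ f x (EuclideanSpace.single i 1)| ≤ M) →
      ∀ x ∈ U, ∀ y ∈ U, |f x - f y| ≤ Real.sqrt n * M * ‖x - y‖) ∧
    (∀ L : ℝ, 0 ≤ L →
      (∀ x ∈ U, ∀ y ∈ U, |f x - f y| ≤ L * ‖x - y‖) →
      ∀ x ∈ U \ Z, ∀ i : Fin n, |fderiv ℝ f x (EuclideanSpace.single i 1)| ≤ L) :=
  lipschitz_iff_bounded_partials_general U Z hUopen hUconv hseg f hcont hdiff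
end

section
/- Let f : ℝⁿ → ℝⁿ be a homeomorphism that is Lipschitz with constant L. Let Z ⊆ ℝⁿ be a set such that the image f(Z) meets every closed line segment in ℝⁿ in a finite set. Suppose f is differentiable at every point of ℝⁿ \ Z and there is a constant c₁ > 0 with |det(Df(x))| ≥ c₁ for all x ∈ ℝⁿ \ Z. Then the inverse homeomorphism f⁻¹ : ℝⁿ → ℝⁿ is Lipschitz (for some constant). -/
/-!
Off `f(Z)` the inverse `f⁻¹` is differentiable with derivative `(Df)⁻¹`. The derivatives `Df`
have norm at most `L` and `|det| ≥ c₁`; such maps form a compact set of invertible maps, on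
which inversion is continuous, so `‖(Df)⁻¹‖ ≤ C` uniformly. On each segment `f⁻¹` is
differentiable off finitely many points, and the mean value inequality on the pieces between
them makes `f⁻¹` `C`-Lipschitz.
-/

open Set Filter NNReal

theorem LipschitzOnWith.Icc_trans {α : Type*} [PseudoMetricSpace α] {g : ℝ → α}
    {C : ℝ≥0} {a b c : ℝ} (hac : LipschitzOnWith C g (Icc a c))
    (hcb : LipschitzOnWith C g (Icc c b)) : LipschitzOnWith C g (Icc a b) := by
  refine LipschitzOnWith.of_dist_le_mul fun x hx y hy => ?_
  wlog hxy : x ≤ y generalizing x y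
  · rw [dist_comm, dist_comm x]
    exact this y hy x hx (le_of_not_ge hxy)
  rcases le_total y c with hyc | hcy
  · exact hac.dist_le_mul x ⟨hx.1, hxy.trans hyc⟩ y ⟨hy.1, hyc⟩
  rcases le_total c x with hcx | hxc
  · exact hcb.dist_le_mul x ⟨hcx, hx.2⟩ y ⟨hcy, hy.2⟩
  calc dist (g x) (g y) ≤ dist (g x) (g c) + dist (g c) (g y) := dist_triangle _ _ _
    _ ≤ C * dist x c + C * dist c y := by
      gcongr
      · exact hac.dist_le_mul x ⟨hx.1, hxc⟩ c ⟨hx.1.trans hxc, le_rfl⟩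
      · exact hcb.dist_le_mul c ⟨le_rfl, hcy.trans hy.2⟩ y ⟨hcy, hy.2⟩
    _ = C * dist x y := by
      rw [← mul_add, dist_add_dist_of_mem_segment]
      rw [segment_eq_Icc hxy]
      exact ⟨hxc, hcy⟩

section MeanValue

variable {E F : Type*} [NormedAddCommGroup E] [NormedSpace ℝ E]
  [NormedAddCommGroup F] [NormedSpace ℝ F]

theorem lipschitzOnWith_Icc_of_hasDerivAt_off_finite {g g' : ℝ → E} {C : ℝ≥0} {s : Set ℝ}
    (hs : s.Finite) {a b : ℝ} (hg : ContinuousOn g (Icc a b))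
    (hderiv : ∀ t ∈ Ioo a b \ s, HasDerivAt g (g' t) t)
    (hbound : ∀ t ∈ Ioo a b \ s, ‖g' t‖₊ ≤ C) : LipschitzOnWith C g (Icc a b) := by
  induction s, hs using Set.Finite.induction_on generalizing a b with
  | empty =>
    rcases le_or_gt b a with hba | hab
    · exact LipschitzOnWith.of_dist_le_mul fun x hx y hy => by
        rw [subsingleton_Icc_of_ge hba hx hy, dist_self, dist_self, mul_zero]
    rw [← closure_Ioo hab.ne] at hg ⊢
    exact LipschitzOnWith.closure hg <|
      (convex_Ioo a b).lipschitzOnWith_of_nnnorm_hasDerivWithin_le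
        (fun t ht => (hderiv t ⟨ht, notMem_empty t⟩).hasDerivWithinAt)
        (fun t ht => hbound t ⟨ht, notMem_empty t⟩)
  | @insert c s _ _ ih =>
    by_cases hc : c ∈ Ioo a b
    · have hleft : Ioo a c \ s ⊆ Ioo a b \ insert c s := fun t ht =>
        ⟨⟨ht.1.1, ht.1.2.trans hc.2⟩, by rintro (rfl | h); exacts [lt_irrefl t ht.1.2, ht.2 h]⟩
      have hright : Ioo c b \ s ⊆ Ioo a b \ insert c s := fun t ht =>
        ⟨⟨hc.1.trans ht.1.1, ht.1.2⟩, by rintro (rfl | h); exacts [lt_irrefl t ht.1.1, ht.2 h]⟩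
      exact LipschitzOnWith.Icc_trans (c := c)
        (ih (hg.mono (Icc_subset_Icc_right hc.2.le)) (fun t ht => hderiv t (hleft ht))
          (fun t ht => hbound t (hleft ht)))
        (ih (hg.mono (Icc_subset_Icc_left hc.1.le)) (fun t ht => hderiv t (hright ht))
          (fun t ht => hbound t (hright ht)))
    · rw [sdiff_insert_of_notMem hc] at hderiv hbound
      exact ih hg hderiv hbound

theorem lipschitzWith_of_hasFDerivAt_off_of_finite_inter_segment {g : E → F}
    {g' : E → E →L[ℝ] F} {C : ℝ≥0} {S : Set E} (hS : ∀ x y, (S ∩ segment ℝ x y).Finite)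
    (hg : Continuous g) (hderiv : ∀ p ∉ S, HasFDerivAt g (g' p) p)
    (hbound : ∀ p ∉ S, ‖g' p‖₊ ≤ C) : LipschitzWith C g := by
  refine LipschitzWith.of_dist_le_mul fun y x => ?_
  rcases eq_or_ne x y with rfl | hxy
  · simp
  let ℓ : ℝ → E := AffineMap.lineMap x y
  have hfin : (Icc 0 1 ∩ ℓ ⁻¹' S).Finite := by
    refine ((hS x y).preimage (AffineMap.lineMap_injective ℝ hxy).injOn).subset
      fun t ht => ?_
    exact ⟨ht.2, segment_eq_image_lineMap ℝ x y ▸ mem_image_of_mem ℓ ht.1⟩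
  have hoff : ∀ t ∈ Ioo 0 1 \ (Icc 0 1 ∩ ℓ ⁻¹' S), ℓ t ∉ S := fun t ht hS =>
    ht.2 ⟨Ioo_subset_Icc_self ht.1, hS⟩
  have hline : LipschitzOnWith (C * ‖y - x‖₊) (g ∘ ℓ) (Icc 0 1) := by
    refine lipschitzOnWith_Icc_of_hasDerivAt_off_finite (g' := fun t => g' (ℓ t) (y - x)) hfin
      (hg.comp AffineMap.lineMap_continuous).continuousOn
      (fun t ht => (hderiv _ (hoff t ht)).comp_hasDerivAt t AffineMap.hasDerivAt_lineMap)
      (fun t ht => ?_)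
    exact ((g' (ℓ t)).le_opNNNorm _).trans (by gcongr; exact hbound _ (hoff t ht))
  simpa [ℓ, dist_eq_norm] using hline.dist_le_mul 1 (by simp) 0 (by simp)

end MeanValue

section Inverse

variable {𝕜 E : Type*} [NontriviallyNormedField 𝕜] [NormedAddCommGroup E] [NormedSpace 𝕜 E]
  [FiniteDimensional 𝕜 E]

theorem ContinuousLinearMap.isUnit_of_det_ne_zero [CompleteSpace 𝕜] {B : E →L[𝕜] E}
    (hB : B.det ≠ 0) : IsUnit B :=
  ⟨(B.toContinuousLinearEquivOfDetNeZero hB).toUnit, by ext; rfl⟩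

theorem Homeomorph.hasFDerivAt_symm_of_det_ne_zero [CompleteSpace 𝕜] (f : E ≃ₜ E)
    {B : E →L[𝕜] E} {p : E} (hf : HasFDerivAt f B (f.symm p)) (hB : B.det ≠ 0) :
    HasFDerivAt f.symm (Ring.inverse B) p := by
  have he : (B.toContinuousLinearEquivOfDetNeZero hB : E →L[𝕜] E) = B :=
    B.coe_toContinuousLinearEquivOfDetNeZero hB
  rw [← he, ContinuousLinearMap.ringInverse_equiv, ContinuousLinearMap.inverse_equiv]
  rw [← he] at hf
  exact hf.of_local_left_inverse f.symm.continuous.continuousAt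
    (Eventually.of_forall f.apply_symm_apply)

theorem exists_nnnorm_ringInverse_le_of_norm_le_of_det_ge [ProperSpace 𝕜] (L : ℝ) {c : ℝ}
    (hc : 0 < c) :
    ∃ C : ℝ≥0, ∀ B : E →L[𝕜] E, ‖B‖ ≤ L → c ≤ ‖B.det‖ → ‖Ring.inverse B‖₊ ≤ C := by
  have : ProperSpace (E →L[𝕜] E) := FiniteDimensional.proper 𝕜 _
  let K : Set (E →L[𝕜] E) := {B | ‖B‖ ≤ L ∧ c ≤ ‖B.det‖}
  have hK : IsCompact K := by
    refine (isCompact_closedBall (0 : E →L[𝕜] E) L).of_isClosed_subset ?_ fun B hB => ?_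
    · exact (isClosed_le continuous_norm continuous_const).inter
        (isClosed_le continuous_const ContinuousLinearMap.continuous_det.norm)
    · simpa using hB.1
  have hinv : ContinuousOn (fun B => ‖Ring.inverse B‖₊) K := fun B hB => by
    obtain ⟨u, rfl⟩ :=
      ContinuousLinearMap.isUnit_of_det_ne_zero (norm_pos_iff.mp (hc.trans_le hB.2))
    exact (NormedRing.inverse_continuousAt u).nnnorm.continuousWithinAt
  obtain ⟨C, hC⟩ := (hK.image_of_continuousOn hinv).bddAbove
  exact ⟨C, fun B hL hdet => hC ⟨B, ⟨hL, hdet⟩, rfl⟩⟩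

end Inverse

/-- **The inverse of a Lipschitz homeomorphism with Jacobian bounded below is Lipschitz**
(Corollary 2.3 of the paper). Let `f : ℝⁿ → ℝⁿ` be a homeomorphism, Lipschitz with
constant `L`, differentiable off a set `Z` whose image `f(Z)` meets every closed segment
in a finite set, with `|det (Df x)| ≥ c₁ > 0` off `Z`. Then `f⁻¹` is Lipschitz. -/
theorem inverse_lipschitz_of_lipschitz_of_det_bounded_below
    {n : ℕ}
    (f : EuclideanSpace ℝ (Fin n) ≃ₜ EuclideanSpace ℝ (Fin n))
    (L : ℝ) (hlip : ∀ x y : EuclideanSpace ℝ (Fin n), ‖f x - f y‖ ≤ L * ‖x - y‖)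
    (Z : Set (EuclideanSpace ℝ (Fin n)))
    (hseg : ∀ x y : EuclideanSpace ℝ (Fin n), ((f '' Z) ∩ segment ℝ x y).Finite)
    (hdiff : ∀ x ∉ Z, DifferentiableAt ℝ f x)
    (c₁ : ℝ) (hc₁ : 0 < c₁)
    (hdet : ∀ x ∉ Z, c₁ ≤ |LinearMap.det (fderiv ℝ f x).toLinearMap|) :
    ∃ L' : ℝ, ∀ x y : EuclideanSpace ℝ (Fin n),
      ‖f.symm x - f.symm y‖ ≤ L' * ‖x - y‖ := by
  have hf : LipschitzWith L.toNNReal f :=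
    LipschitzWith.of_dist_le' fun x y => by simpa only [dist_eq_norm] using hlip x y
  obtain ⟨C, hC⟩ := exists_nnnorm_ringInverse_le_of_norm_le_of_det_ge
    (𝕜 := ℝ) (E := EuclideanSpace ℝ (Fin n)) L.toNNReal hc₁
  have hZ : ∀ p ∉ f '' Z, f.symm p ∉ Z := fun p hp hpZ => hp ⟨f.symm p, hpZ, f.apply_symm_apply p⟩
  have hsymm : LipschitzWith C f.symm := by
    refine lipschitzWith_of_hasFDerivAt_off_of_finite_inter_segment hseg f.symm.continuous
      (g' := fun p => Ring.inverse (fderiv ℝ f (f.symm p))) (fun p hp => ?_) (fun p hp => ?_)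
    · exact f.hasFDerivAt_symm_of_det_ne_zero (hdiff _ (hZ p hp)).hasFDerivAt
        (abs_pos.mp (hc₁.trans_le (hdet _ (hZ p hp))))
    · exact hC _ ((hdiff _ (hZ p hp)).hasFDerivAt.le_of_lipschitz hf)
        (by simpa only [Real.norm_eq_abs] using hdet _ (hZ p hp))
  exact ⟨C, hsymm.norm_sub_le⟩
end

section
/- Let σ = (σ₁,…,σₙ) be an n-tuple of polynomials in ℝ[x₁,…,xₙ], defining a polynomial map ℝⁿ → ℝⁿ. Let γ = (γ₁,…,γₙ) be an n-tuple of formal power series in ℝ⟦t⟧, each of order ≥ 1, and suppose the determinant of the Jacobian matrix J(t) = ((∂σᵢ/∂xⱼ)(γ))_{i,j} is nonzero of order e ∈ ℕ. Let k ≥ 2e be an integer and let J_k = (ℝ[t]/(t^{k+1}))ⁿ be the space of k-jets. Then the set T ⊆ J_k of reductions modulo t^{k+1} of those n-tuples δ ∈ ℝ⟦t⟧ⁿ satisfying δ ≡ γ mod t^{k−e+1} and σ(δ) ≡ σ(γ) mod t^{k+1} is an affine subspace of J_k of dimension e; that is, T = γ̄ + W where γ̄ is the class of γ and W is an ℝ-linear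 subspace of J_k with dim_ℝ W = e. -/
/-!
Write `δ = γ + tᶜ u` with `c = k - e + 1`. Since `2c > k`, Taylor's formula reduces
`σ(δ) ≡ σ(γ) mod t^(k+1)` to the linear condition `J u ≡ 0 mod tᵉ`, where `J` is the Jacobian
matrix along `γ`; as `det J = tᵉ · unit`, this says exactly that `u = adj(J) z` for some `z`.
Hence the fibre is `γ̄` plus the image of `z ↦ tᶜ adj(J) z mod t^(k+1)`, a linear map whose kernel
is `J ℝ⟦t⟧ⁿ`. Over the discrete valuation ring `ℝ⟦t⟧` the Smith normal form of `J` shows that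
`ℝ⟦t⟧ⁿ / J ℝ⟦t⟧ⁿ` has dimension `ord (det J) = e`.
-/

open Module

namespace MvPolynomial

variable {R S ι : Type*} [CommRing R] [CommRing S] [Algebra R S]

noncomputable def jacobianAt (σ : ι → MvPolynomial ι R) (x : ι → S) : Matrix ι ι S :=
  Matrix.of fun i j => aeval x (pderiv j (σ i))

variable {I : Ideal S}

theorem aeval_add_sub_aeval_mem {x h : ι → S} (hh : ∀ i, h i ∈ I) (p : MvPolynomial ι R) :
    aeval (x + h) p - aeval x p ∈ I := by
  rw [← Ideal.Quotient.eq, ← Ideal.Quotient.mkₐ_eq_mk R, ← AlgHom.comp_apply, ← AlgHom.comp_apply,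
    comp_aeval, comp_aeval]
  congr 2
  funext i
  simpa [Ideal.Quotient.eq_zero_iff_mem] using hh i

variable [Fintype ι]

theorem aeval_add_sub_aeval_sub_sum_pderiv_mem_sq {x h : ι → S} (hh : ∀ i, h i ∈ I)
    (p : MvPolynomial ι R) :
    aeval (x + h) p - aeval x p - ∑ j, aeval x (pderiv j p) * h j ∈ I ^ 2 := by
  classical
  induction p using MvPolynomial.induction_on with
  | C r => simp
  | add p q hp hq =>
    convert Ideal.add_mem _ hp hq using 1
    simp only [map_add, add_mul, Finset.sum_add_distrib]
    ring
  | mul_X p i hp =>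
    have hpderiv : ∀ j, aeval x (pderiv j (p * X i)) =
        aeval x (pderiv j p) * x i + if i = j then aeval x p else 0 := by
      intro j
      rw [Derivation.leibniz, pderiv_X, Pi.single_apply]
      split_ifs <;> simp only [smul_eq_mul, map_add, map_mul, aeval_X, mul_one, mul_zero,
        map_zero] <;> ring
    have hexpand : aeval (x + h) (p * X i) - aeval x (p * X i) -
        ∑ j, aeval x (pderiv j (p * X i)) * h j =
        x i * (aeval (x + h) p - aeval x p - ∑ j, aeval x (pderiv j p) * h j) +
          h i * (aeval (x + h) p - aeval x p) := by
      simp only [hpderiv, add_mul, ite_mul, zero_mul, Finset.sum_add_distrib, Finset.sum_ite_eq,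
        Finset.mem_univ, if_true, map_mul, aeval_X, Pi.add_apply, mul_right_comm _ (x i),
        ← Finset.sum_mul]
      ring
    rw [hexpand, sq]
    exact Ideal.add_mem _ (Ideal.mul_mem_left _ _ (sq I ▸ hp))
      (Ideal.mul_mem_mul (hh i) (aeval_add_sub_aeval_mem hh p))

theorem aeval_add_sub_aeval_mem_iff {I' : Ideal S} (hII' : I ^ 2 ≤ I') {x h : ι → S}
    (hh : ∀ i, h i ∈ I) (p : MvPolynomial ι R) :
    aeval (x + h) p - aeval x p ∈ I' ↔ ∑ j, aeval x (pderiv j p) * h j ∈ I' := by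
  have hrem := hII' (aeval_add_sub_aeval_sub_sum_pderiv_mem_sq (x := x) hh p)
  constructor
  · intro hmem
    simpa only [sub_sub_cancel] using I'.sub_mem hmem hrem
  · intro hmem
    simpa only [add_sub_cancel] using I'.add_mem hmem hrem

end MvPolynomial

theorem Polynomial.isDistinguishedAt_X_pow {R : Type*} [CommRing R] [Nontrivial R]
    (I : Ideal R) (d : ℕ) : ((X : Polynomial R) ^ d).IsDistinguishedAt I where
  mem {n} hn := by
    rw [natDegree_X_pow] at hn
    simp [coeff_X_pow, hn.ne]
  monic := monic_X_pow d

namespace PowerSeries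

theorem ne_zero_of_order_eq_natCast {R : Type*} [Semiring R] {f : R⟦X⟧} {d : ℕ}
    (h : f.order = d) : f ≠ 0 :=
  order_eq_top.not.mp (h ▸ ENat.natCast_ne_top d)

variable {K : Type*} [Field K]

theorem order_eq_of_associated {f g : K⟦X⟧} (h : Associated f g) : f.order = g.order := by
  rw [order_eq_emultiplicity_X, order_eq_emultiplicity_X, emultiplicity_eq_of_associated_right h]

theorem span_singleton_eq_span_X_pow_order {f : K⟦X⟧} (hf : f ≠ 0) :
    Ideal.span {f} = Ideal.span {X ^ f.order.toNat} := by
  conv_lhs => rw [← X_pow_order_mul_divXPowOrder (f := f)]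
  exact Ideal.span_singleton_mul_right_unit (isUnit_divided_by_X_pow_order hf) _

theorem span_singleton_eq_span_X_pow_of_order_eq {f : K⟦X⟧} {d : ℕ} (h : f.order = d) :
    Ideal.span {f} = Ideal.span {X ^ d} := by
  rw [span_singleton_eq_span_X_pow_order (ne_zero_of_order_eq_natCast h), h, ENat.toNat_natCast]

theorem X_pow_mul_mem_span_X_pow_add_iff (c e : ℕ) (f : K⟦X⟧) :
    X ^ c * f ∈ Ideal.span {X ^ (c + e)} ↔ f ∈ Ideal.span {X ^ e} := by
  rw [Ideal.mem_span_singleton, Ideal.mem_span_singleton, pow_add]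
  exact mul_dvd_mul_iff_left (pow_ne_zero c X_ne_zero)

noncomputable def quotientSpanEquivPolynomial {f : K⟦X⟧} (hf : f ≠ 0) :
    (K⟦X⟧ ⧸ Ideal.span {f}) ≃ₗ[K]
      Polynomial K ⧸ Ideal.span {(Polynomial.X : Polynomial K) ^ f.order.toNat} :=
  ((Submodule.quotEquivOfEq (Ideal.span {f})
      (Ideal.span {((Polynomial.X ^ f.order.toNat : Polynomial K) : K⟦X⟧)}) (by
        rw [span_singleton_eq_span_X_pow_order hf, Polynomial.coe_pow, Polynomial.coe_X])
    ).restrictScalars K).trans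
    (Polynomial.IsDistinguishedAt.algEquivQuotient (A := K)
      (Polynomial.isDistinguishedAt_X_pow ⊥ f.order.toNat)).symm.toLinearEquiv

theorem finite_quotient_span_singleton {f : K⟦X⟧} (hf : f ≠ 0) :
    Module.Finite K (K⟦X⟧ ⧸ Ideal.span {f}) :=
  have : Module.Finite K
      (Polynomial K ⧸ Ideal.span {(Polynomial.X : Polynomial K) ^ f.order.toNat}) :=
    (AdjoinRoot.powerBasis (pow_ne_zero f.order.toNat Polynomial.X_ne_zero)).finite
  Module.Finite.equiv (quotientSpanEquivPolynomial hf).symm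

theorem finrank_quotient_span_singleton {f : K⟦X⟧} (hf : f ≠ 0) :
    finrank K (K⟦X⟧ ⧸ Ideal.span {f}) = f.order.toNat := by
  rw [(quotientSpanEquivPolynomial hf).finrank_eq, finrank_quotient_span_eq_natDegree,
    Polynomial.natDegree_X_pow]

end PowerSeries

open Submodule in
theorem LinearMap.associated_det_prod_smithNormalFormCoeffs {ι R M : Type*} [CommRing R]
    [IsDomain R] [IsPrincipalIdealRing R] [AddCommGroup M] [Module R M] [Fintype ι]
    [DecidableEq ι] (b : Basis ι R M) {f : M →ₗ[R] M} (hf : Function.Injective f)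
    (h : finrank R (range f) = finrank R M) :
    Associated (LinearMap.det f) (∏ i, smithNormalFormCoeffs b h i) := by
  let b' := smithNormalFormTopBasis b h
  let e : M ≃ₗ[R] range f := b'.equiv (smithNormalFormBotBasis b h) (Equiv.refl _)
  have hdiag : LinearMap.toMatrix b' b' ((range f).subtype ∘ₗ e) =
      Matrix.diagonal (smithNormalFormCoeffs b h) := by
    ext i j
    rw [LinearMap.toMatrix_apply, LinearMap.comp_apply, LinearEquiv.coe_coe, b'.equiv_apply,
      Equiv.refl_apply, Submodule.subtype_apply, smithNormalFormBotBasis_def, map_smul,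
      b'.repr_self, Finsupp.smul_single, smul_eq_mul, mul_one]
    by_cases hij : i = j
    · rw [hij, Matrix.diagonal_apply_eq, Finsupp.single_eq_same]
    · rw [Matrix.diagonal_apply_ne _ hij, Finsupp.single_eq_of_ne hij]
  rw [← Matrix.det_diagonal, ← hdiag, LinearMap.det_toMatrix]
  exact LinearMap.associated_det_comp_equiv (range f).subtype (LinearEquiv.ofInjective f hf) e

namespace Matrix

open PowerSeries in
theorem finrank_quotient_range_mulVecLin {K ι : Type*} [Field K] [Fintype ι] [DecidableEq ι]
    (J : Matrix ι ι K⟦X⟧) (hJ : J.det ≠ 0) :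
    finrank K ((ι → K⟦X⟧) ⧸ LinearMap.range J.mulVecLin) = J.det.order.toNat := by
  have hinj : Function.Injective J.mulVecLin := mulVec_injective_of_det_ne_zero hJ
  have h := LinearMap.finrank_range_of_inj hinj
  let b := Pi.basisFun K⟦X⟧ ι
  have ha := Submodule.smithNormalFormCoeffs_ne_zero b h
  have := fun i => finite_quotient_span_singleton (ha i)
  have hdet : J.det.order = ∑ i, (Submodule.smithNormalFormCoeffs b h i).order := by
    rw [← order_prod, ← LinearMap.det_toLin', toLin'_apply']
    exact order_eq_of_associated (LinearMap.associated_det_prod_smithNormalFormCoeffs b hinj h)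
  rw [Submodule.finrank_quotient_eq_sum K b h, hdet, ENat.toNat_sum fun i _ => ?_]
  · exact Finset.sum_congr rfl fun i _ => finrank_quotient_span_singleton (ha i)
  · exact order_eq_top.not.mpr (ha i)

theorem forall_mulVec_mem_span_iff_mem_range {R n : Type*} [CommRing R] [IsDomain R]
    [Fintype n] [DecidableEq n] {A B : Matrix n n R} {d : R} (hd : d ≠ 0)
    (hAB : A * B = d • 1) (hBA : B * A = d • 1) (u : n → R) :
    (∀ i, (A *ᵥ u) i ∈ Ideal.span {d}) ↔ u ∈ Set.range B.mulVec := by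
  simp only [Ideal.mem_span_singleton]
  constructor
  · intro hu
    choose v hv using hu
    have hAu : A *ᵥ u = d • v := funext hv
    refine ⟨v, smul_right_injective _ hd ?_⟩
    calc d • B *ᵥ v = B *ᵥ (A *ᵥ u) := by rw [hAu, mulVec_smul]
      _ = d • u := by rw [mulVec_mulVec, hBA, smul_mulVec, one_mulVec]
  · rintro ⟨v, rfl⟩ i
    rw [mulVec_mulVec, hAB, smul_mulVec, one_mulVec, Pi.smul_apply, smul_eq_mul]
    exact dvd_mul_right d (v i)

end Matrix

open PowerSeries Matrix
open MvPolynomial (aeval jacobianAt)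

section Jet

variable {K ι : Type*} [Field K]

variable (K ι) in
/-- The `k`-jets of the paper are the values of `jet K ι (k + 1)`. -/
noncomputable def jet (m : ℕ) :
    (ι → K⟦X⟧) →ₗ[K] ι → K⟦X⟧ ⧸ Ideal.span {(X : K⟦X⟧) ^ m} :=
  LinearMap.pi fun i => (Ideal.Quotient.mkₐ K _).toLinearMap ∘ₗ LinearMap.proj i

theorem jet_apply (m : ℕ) (v : ι → K⟦X⟧) (i : ι) :
    jet K ι m v i = Ideal.Quotient.mk _ (v i) := rfl

theorem jet_X_pow_smul_eq_zero_iff (c e : ℕ) (v : ι → K⟦X⟧) :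
    jet K ι (c + e) ((X : K⟦X⟧) ^ c • v) = 0 ↔ ∀ i, v i ∈ Ideal.span {(X : K⟦X⟧) ^ e} := by
  simp only [funext_iff, jet_apply, Pi.zero_apply, Ideal.Quotient.eq_zero_iff_mem, Pi.smul_apply,
    smul_eq_mul, X_pow_mul_mem_span_X_pow_add_iff]

variable [Fintype ι] [DecidableEq ι]

theorem finrank_range_jet_comp_adjugate {J : Matrix ι ι K⟦X⟧} {e : ℕ} (hord : J.det.order = e)
    (c : ℕ) :
    finrank K (LinearMap.range
      (jet K ι (c + e) ∘ₗ ((X : K⟦X⟧) ^ c • J.adjugate.mulVecLin).restrictScalars K)) = e := by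
  have hJ := ne_zero_of_order_eq_natCast hord
  have hker : LinearMap.ker
      (jet K ι (c + e) ∘ₗ ((X : K⟦X⟧) ^ c • J.adjugate.mulVecLin).restrictScalars K) =
      (LinearMap.range J.mulVecLin).restrictScalars K := by
    ext z
    rw [LinearMap.mem_ker, Submodule.restrictScalars_mem, LinearMap.comp_apply,
      LinearMap.restrictScalars_apply, LinearMap.smul_apply, mulVecLin_apply,
      jet_X_pow_smul_eq_zero_iff, ← span_singleton_eq_span_X_pow_of_order_eq hord,
      forall_mulVec_mem_span_iff_mem_range hJ (adjugate_mul J) (mul_adjugate J)]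
    rfl
  rw [← (LinearMap.quotKerEquivRange _).finrank_eq, hker,
    (Submodule.Quotient.restrictScalarsEquiv K _).finrank_eq, finrank_quotient_range_mulVecLin J hJ,
    hord, ENat.toNat_natCast]

variable {σ : ι → MvPolynomial ι K} {γ : ι → K⟦X⟧} {c e : ℕ}

theorem forall_aeval_add_X_pow_smul_sub_aeval_mem_iff (hord : (jacobianAt σ γ).det.order = e)
    (hec : e ≤ c) (u : ι → K⟦X⟧) :
    (∀ i, aeval (γ + (X : K⟦X⟧) ^ c • u) (σ i) - aeval γ (σ i) ∈
      Ideal.span {(X : K⟦X⟧) ^ (c + e)}) ↔ u ∈ Set.range (jacobianAt σ γ).adjugate.mulVec := by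
  have hsq : Ideal.span {(X : K⟦X⟧) ^ c} ^ 2 ≤ Ideal.span {X ^ (c + e)} := by
    rw [Ideal.span_singleton_pow, Ideal.span_singleton_le_span_singleton, ← pow_mul]
    exact pow_dvd_pow _ (by omega)
  have hh : ∀ i, ((X : K⟦X⟧) ^ c • u) i ∈ Ideal.span {X ^ c} :=
    fun i => Ideal.mem_span_singleton.mpr (dvd_mul_right _ _)
  simp_rw [MvPolynomial.aeval_add_sub_aeval_mem_iff hsq hh]
  change (∀ i, (jacobianAt σ γ *ᵥ ((X : K⟦X⟧) ^ c • u)) i ∈ _) ↔ _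
  simp only [mulVec_smul, Pi.smul_apply, smul_eq_mul, X_pow_mul_mem_span_X_pow_add_iff]
  rw [← span_singleton_eq_span_X_pow_of_order_eq hord]
  exact forall_mulVec_mem_span_iff_mem_range (ne_zero_of_order_eq_natCast hord)
    (mul_adjugate _) (adjugate_mul _) u

theorem setOf_jet_fiber_eq_range (hord : (jacobianAt σ γ).det.order = e) (hec : e ≤ c) :
    {δ : ι → K⟦X⟧ | (∀ i, δ i - γ i ∈ Ideal.span {(X : K⟦X⟧) ^ c}) ∧
        ∀ i, aeval δ (σ i) - aeval γ (σ i) ∈ Ideal.span {(X : K⟦X⟧) ^ (c + e)}} =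
      Set.range fun z => γ + (X : K⟦X⟧) ^ c • ((jacobianAt σ γ).adjugate *ᵥ z) := by
  ext δ
  constructor
  · rintro ⟨hδ, hσ⟩
    choose u hu using fun i => Ideal.mem_span_singleton'.mp (hδ i)
    obtain rfl : δ = γ + (X : K⟦X⟧) ^ c • u := by
      funext i
      simp [hu i, mul_comm]
    obtain ⟨z, rfl⟩ := (forall_aeval_add_X_pow_smul_sub_aeval_mem_iff hord hec u).mp hσ
    exact ⟨z, rfl⟩
  · rintro ⟨z, rfl⟩
    refine ⟨fun i => ?_, (forall_aeval_add_X_pow_smul_sub_aeval_mem_iff hord hec _).mpr ⟨z, rfl⟩⟩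
    simp [Ideal.mem_span_singleton]

end Jet

theorem jet_fiber_affine_of_dim_e_general
    {n : ℕ} (σ : Fin n → MvPolynomial (Fin n) ℝ)
    (γ : Fin n → PowerSeries ℝ)
    (e : ℕ)
    (hord : ((Matrix.of fun i j : Fin n =>
        MvPolynomial.aeval γ (MvPolynomial.pderiv j (σ i))).det).order = (e : ℕ∞))
    (k : ℕ) (hk : 2 * e ≤ k) :
    ∃ W : Submodule ℝ
        (Fin n → PowerSeries ℝ ⧸ Ideal.span {(PowerSeries.X : PowerSeries ℝ) ^ (k + 1)}),
      Module.finrank ℝ W = e ∧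
      ((fun δ : Fin n → PowerSeries ℝ => fun i =>
          Ideal.Quotient.mk
            (Ideal.span {(PowerSeries.X : PowerSeries ℝ) ^ (k + 1)}) (δ i)) ''
        {δ : Fin n → PowerSeries ℝ |
          (∀ i, δ i - γ i ∈
            Ideal.span {(PowerSeries.X : PowerSeries ℝ) ^ (k - e + 1)}) ∧
          (∀ i, MvPolynomial.aeval δ (σ i) - MvPolynomial.aeval γ (σ i) ∈
            Ideal.span {(PowerSeries.X : PowerSeries ℝ) ^ (k + 1)})}) =
      (fun w => (fun i =>
          Ideal.Quotient.mk
            (Ideal.span {(PowerSeries.X : PowerSeries ℝ) ^ (k + 1)}) (γ i)) + w) ''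
        (W : Set (Fin n → PowerSeries ℝ ⧸
          Ideal.span {(PowerSeries.X : PowerSeries ℝ) ^ (k + 1)})) := by
  obtain ⟨c, hc, hce⟩ : ∃ c, k - e + 1 = c ∧ k + 1 = c + e := ⟨k - e + 1, rfl, by omega⟩
  rw [hce, hc]
  refine ⟨LinearMap.range (jet ℝ (Fin n) (c + e) ∘ₗ
    ((X : ℝ⟦X⟧) ^ c • (jacobianAt σ γ).adjugate.mulVecLin).restrictScalars ℝ),
    finrank_range_jet_comp_adjugate hord c, ?_⟩
  rw [setOf_jet_fiber_eq_range hord (by omega), ← Set.range_comp, LinearMap.coe_range,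
    ← Set.range_comp]
  rfl

set_option synthInstance.maxHeartbeats 1000000 in
/-- **Fibers of the jet map are affine spaces of dimension `e`** (Lemma 5.3 of the paper).
Let `σ : ℝⁿ → ℝⁿ` be a polynomial map, `γ ∈ ℝ⟦t⟧ⁿ` a tuple of power series of order `≥ 1`
whose Jacobian determinant along `γ` is nonzero of order `e`, and `k ≥ 2e`. Then in the
jet space `J_k = (ℝ[t]/(t^{k+1}))ⁿ`, the set of reductions of tuples `δ` with
`δ ≡ γ mod t^{k−e+1}` and `σ(δ) ≡ σ(γ) mod t^{k+1}` is an affine subspace `γ̄ + W` with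
`dim_ℝ W = e`. -/
theorem jet_fiber_affine_of_dim_e
    {n : ℕ} (σ : Fin n → MvPolynomial (Fin n) ℝ)
    (γ : Fin n → PowerSeries ℝ) (hγ : ∀ i, 1 ≤ (γ i).order)
    (e : ℕ)
    (hdet : (Matrix.of fun i j : Fin n =>
        MvPolynomial.aeval γ (MvPolynomial.pderiv j (σ i))).det ≠ 0)
    (hord : ((Matrix.of fun i j : Fin n =>
        MvPolynomial.aeval γ (MvPolynomial.pderiv j (σ i))).det).order = (e : ℕ∞))
    (k : ℕ) (hk : 2 * e ≤ k) :
    ∃ W : Submodule ℝ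
        (Fin n → PowerSeries ℝ ⧸ Ideal.span {(PowerSeries.X : PowerSeries ℝ) ^ (k + 1)}),
      Module.finrank ℝ W = e ∧
      ((fun δ : Fin n → PowerSeries ℝ => fun i =>
          Ideal.Quotient.mk
            (Ideal.span {(PowerSeries.X : PowerSeries ℝ) ^ (k + 1)}) (δ i)) ''
        {δ : Fin n → PowerSeries ℝ |
          (∀ i, δ i - γ i ∈
            Ideal.span {(PowerSeries.X : PowerSeries ℝ) ^ (k - e + 1)}) ∧
          (∀ i, MvPolynomial.aeval δ (σ i) - MvPolynomial.aeval γ (σ i) ∈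
            Ideal.span {(PowerSeries.X : PowerSeries ℝ) ^ (k + 1)})}) =
      (fun w => (fun i =>
          Ideal.Quotient.mk
            (Ideal.span {(PowerSeries.X : PowerSeries ℝ) ^ (k + 1)}) (γ i)) + w) ''
        (W : Set (Fin n → PowerSeries ℝ ⧸
          Ideal.span {(PowerSeries.X : PowerSeries ℝ) ^ (k + 1)})) :=
  jet_fiber_affine_of_dim_e_general σ γ e hord k hk
end
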